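/- There exists ν₊ > 0 such that for every ν ∈ (0, ν₊] and every point (x, y, z) ∈ C_ν^{ct+} := [√ν/2, √(2ν)] × [−ν^{3/2}, ν^{3/2}] × [−ν^{3/2}, ν^{3/2}]: if y = ν^{3/2} then the second component of G_ν(x, y, z) is strictly positive, and if y = −ν^{3/2} then the second component of G_ν(x, y, z) is strictly negative; the analogous statements hold on C_ν^{ct−} := [−√(2ν), −√ν/2] × [−ν^{3/2}, ν^{3/2}] × [−ν^{3/2}, ν^{3/2}]. -/

import Mathlib

open Set

/-- The vector field in `ℝ³`:
`G_ν(x,y,z) = (x(ν − x²) + x³(y+z) + x(y²+z²) + yz, y + x²(y+z) + x⁴ + yz, −z + x²(y+z) + x⁴ + yz)`. -/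
noncomputable def G (ν : ℝ) (p : ℝ × ℝ × ℝ) : ℝ × ℝ × ℝ :=
  (p.1 * (ν - p.1 ^ 2) + p.1 ^ 3 * (p.2.1 + p.2.2) + p.1 * (p.2.1 ^ 2 + p.2.2 ^ 2)
      + p.2.1 * p.2.2,
   p.2.1 + p.1 ^ 2 * (p.2.1 + p.2.2) + p.1 ^ 4 + p.2.1 * p.2.2,
   -p.2.2 + p.1 ^ 2 * (p.2.1 + p.2.2) + p.1 ^ 4 + p.2.1 * p.2.2)

/-- The box `S_θ = [−√(2θ), √(2θ)] × [−θ^{3/2}, θ^{3/2}] × [−θ^{3/2}, θ^{3/2}]`. -/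
noncomputable def S (θ : ℝ) : Set (ℝ × ℝ × ℝ) :=
  Icc (-Real.sqrt (2 * θ)) (Real.sqrt (2 * θ)) ×ˢ
    (Icc (-θ ^ ((3 : ℝ) / 2)) (θ ^ ((3 : ℝ) / 2)) ×ˢ
      Icc (-θ ^ ((3 : ℝ) / 2)) (θ ^ ((3 : ℝ) / 2)))

/-- The box `C_ν^{ct+} = [√ν/2, √(2ν)] × [−ν^{3/2}, ν^{3/2}]²`. -/
noncomputable def Cctp (ν : ℝ) : Set (ℝ × ℝ × ℝ) :=
  Icc (Real.sqrt ν / 2) (Real.sqrt (2 * ν)) ×ˢ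
    (Icc (-ν ^ ((3 : ℝ) / 2)) (ν ^ ((3 : ℝ) / 2)) ×ˢ
      Icc (-ν ^ ((3 : ℝ) / 2)) (ν ^ ((3 : ℝ) / 2)))

/-- The box `C_ν^{ct−} = [−√(2ν), −√ν/2] × [−ν^{3/2}, ν^{3/2}]²`. -/
noncomputable def Cctm (ν : ℝ) : Set (ℝ × ℝ × ℝ) :=
  Icc (-Real.sqrt (2 * ν)) (-(Real.sqrt ν / 2)) ×ˢ
    (Icc (-ν ^ ((3 : ℝ) / 2)) (ν ^ ((3 : ℝ) / 2)) ×ˢ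
      Icc (-ν ^ ((3 : ℝ) / 2)) (ν ^ ((3 : ℝ) / 2)))

/-! On the face `y = s` the second component is `s(1 + z) + x²(s + z) + x⁴ ≥ s(1 - s) > 0` because
`|z| ≤ s < 1`. On the face `y = -s` it is at most `-s + x⁴ + s²`, which is negative once
`x⁴ ≤ 4ν²`, `s = ν^{3/2}` and `4ν² + ν³ < ν^{3/2}`, i.e. `4√ν + ν^{3/2} < 1`; `ν₊ = 1/100`
suffices. -/

lemma G_snd_pos_of_abs_le {ν x y z : ℝ} (hy₀ : 0 < y) (hy₁ : y < 1) (hz : |z| ≤ y) :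
    0 < (G ν (x, y, z)).2.1 := by
  obtain ⟨hzl, hzr⟩ := abs_le.mp hz
  have : 0 ≤ x ^ 2 * (y + z) := mul_nonneg (sq_nonneg x) (by linarith)
  have : 0 < y * (1 + z) := mul_pos hy₀ (by linarith)
  simp only [G]
  nlinarith [pow_two_nonneg (x ^ 2)]

lemma G_snd_neg_of_abs_le {ν x y z : ℝ} (hz : |z| ≤ -y) (hx : x ^ 4 + y ^ 2 < -y) :
    (G ν (x, y, z)).2.1 < 0 := by
  obtain ⟨hzl, hzr⟩ := abs_le.mp hz
  have : x ^ 2 * (y + z) ≤ 0 := mul_nonpos_of_nonneg_of_nonpos (sq_nonneg x) (by linarith)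
  have : y * z ≤ y ^ 2 := by nlinarith
  simp only [G]
  linarith

lemma Cctp_subset_S (ν : ℝ) : Cctp ν ⊆ S ν :=
  prod_mono (Icc_subset_Icc_left (by linarith [Real.sqrt_nonneg ν, Real.sqrt_nonneg (2 * ν)]))
    subset_rfl

lemma Cctm_subset_S (ν : ℝ) : Cctm ν ⊆ S ν :=
  prod_mono (Icc_subset_Icc_right (by linarith [Real.sqrt_nonneg ν, Real.sqrt_nonneg (2 * ν)]))
    subset_rfl

lemma fst_pow_four_le_of_mem_S {θ : ℝ} {p : ℝ × ℝ × ℝ} (hθ : 0 ≤ θ) (hp : p ∈ S θ) :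
    p.1 ^ 4 ≤ 4 * θ ^ 2 := by
  have hx : p.1 ^ 2 ≤ 2 * θ := (Real.sq_le (by linarith)).mpr hp.1
  nlinarith [sq_nonneg p.1]

lemma rpow_three_halves_eq_sqrt_pow {ν : ℝ} (hν : 0 ≤ ν) : ν ^ ((3 : ℝ) / 2) = √ν ^ 3 := by
  rw [Real.sqrt_eq_rpow, ← Real.rpow_natCast, ← Real.rpow_mul hν]
  norm_num

lemma rpow_three_halves_sq {ν : ℝ} (hν : 0 ≤ ν) : (ν ^ ((3 : ℝ) / 2)) ^ 2 = ν ^ 3 := by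
  rw [rpow_three_halves_eq_sqrt_pow hν, ← pow_mul, pow_mul', Real.sq_sqrt hν]

lemma four_sq_add_cube_lt_rpow_three_halves {ν : ℝ} (hν : 0 < ν) (hν' : ν ≤ 1 / 100) :
    4 * ν ^ 2 + ν ^ 3 < ν ^ ((3 : ℝ) / 2) := by
  obtain ⟨t, ht, rfl⟩ : ∃ t, 0 < t ∧ ν = t ^ 2 :=
    ⟨√ν, Real.sqrt_pos.mpr hν, (Real.sq_sqrt hν.le).symm⟩
  rw [rpow_three_halves_eq_sqrt_pow (by positivity), Real.sqrt_sq ht.le]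
  have ht' : t ≤ 1 / 10 := by nlinarith
  have : 4 * t + t ^ 3 < 1 := by nlinarith [pow_le_pow_left₀ ht.le ht' 3]
  nlinarith [pow_pos ht 3]

/-- There exists `ν₊ > 0` such that for every `ν ∈ (0, ν₊]` and every point of
`C_ν^{ct+}` (and likewise `C_ν^{ct−}`): on the face `y = ν^{3/2}` the second component
of `G_ν` is strictly positive, and on the face `y = −ν^{3/2}` it is strictly negative. -/
theorem stmt14 :
    ∃ νp : ℝ, 0 < νp ∧ ∀ ν ∈ Ioc (0 : ℝ) νp, ∀ p : ℝ × ℝ × ℝ,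
      (p ∈ Cctp ν ∨ p ∈ Cctm ν) →
      (p.2.1 = ν ^ ((3 : ℝ) / 2) → 0 < (G ν p).2.1) ∧
      (p.2.1 = -ν ^ ((3 : ℝ) / 2) → (G ν p).2.1 < 0) := by
  refine ⟨1 / 100, by norm_num, fun ν ⟨hν, hν'⟩ ⟨x, y, z⟩ hp => ?_⟩
  have hpS : (x, y, z) ∈ S ν := hp.elim (Cctp_subset_S ν ·) (Cctm_subset_S ν ·)
  have hz : |z| ≤ ν ^ ((3 : ℝ) / 2) := abs_le.mpr hpS.2.2
  constructor
  · rintro rfl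
    exact G_snd_pos_of_abs_le (by positivity)
      (Real.rpow_lt_one hν.le (by linarith) (by norm_num)) hz
  · rintro rfl
    refine G_snd_neg_of_abs_le (by rwa [neg_neg]) ?_
    rw [neg_sq, rpow_three_halves_sq hν.le, neg_neg]
    linarith [fst_pow_four_le_of_mem_S hν.le hpS, four_sq_add_cube_lt_rpow_three_halves hν hν']
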